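/- arXiv:2010.00580 — 2 statements merged into one kernel-verified Lean document; each statement's English description precedes it below -/
import Mathlib

section
/- For every real κ > 0, one has ⟨v_1, v_{-1}⟩ < −1 and ⟨v_2, v_{-2}⟩ < −1 if and only if 1 < κ < 4; moreover at κ = 1 one has ⟨v_1, v_{-1}⟩ = −1 (the disks d₁ and d₋₁ become tangent) and at κ = 4 one has ⟨v_2, v_{-2}⟩ = −1 (the disks d₂ and d₋₂ become tangent). Hence the standard pyramidal disk packings are exactly the configurations with parameter κ in the open interval (1, 4). -/
noncomputable section

/-- The Lorentzian product on ℝ⁴: ⟨u,v⟩ = u₁v₁ + u₂v₂ + u₃v₃ − u₄v₄. -/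
def lprod (u v : Fin 4 → ℝ) : ℝ := u 0 * v 0 + u 1 * v 1 + u 2 * v 2 - u 3 * v 3

/-- Inversive coordinates of the disks of the standard pyramidal disk packing. -/
def vx : Fin 4 → ℝ := ![0, -1, 1, 1]
def v1 (κ : ℝ) : Fin 4 → ℝ := ![0, 1 - κ, -1, κ - 1]
def v2 (κ : ℝ) : Fin 4 → ℝ := ![2 / Real.sqrt κ, 0, 2 / κ - 1, 2 / κ]
def vm1 : Fin 4 → ℝ := ![0, 1, 1, 1]
def vm2 (κ : ℝ) : Fin 4 → ℝ := ![-(2 / Real.sqrt κ), 0, 2 / κ - 1, 2 / κ]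

theorem lprod_v1_vm1 (κ : ℝ) : lprod (v1 κ) vm1 = 1 - 2 * κ := by
  simp only [lprod, v1, vm1, Matrix.cons_val]
  ring

theorem lprod_v2_vm2 {κ : ℝ} (hκ : 0 < κ) : lprod (v2 κ) (vm2 κ) = 1 - 8 / κ := by
  have hsqrt : Real.sqrt κ ≠ 0 := (Real.sqrt_pos.mpr hκ).ne'
  simp only [lprod, v2, vm2, Matrix.cons_val]
  field_simp
  rw [Real.sq_sqrt hκ.le]
  ring

theorem lprod_v1_vm1_lt_neg_one_iff (κ : ℝ) : lprod (v1 κ) vm1 < -1 ↔ 1 < κ := by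
  rw [lprod_v1_vm1]
  constructor <;> intro h <;> linarith

theorem lprod_v2_vm2_lt_neg_one_iff {κ : ℝ} (hκ : 0 < κ) :
    lprod (v2 κ) (vm2 κ) < -1 ↔ κ < 4 := by
  rw [lprod_v2_vm2 hκ, sub_lt_comm, lt_div_iff₀ hκ]
  constructor <;> intro h <;> linarith

/-- For `κ > 0`, the disjoint pairs of the standard pyramidal disk packing have
inversive product `< −1` iff `1 < κ < 4`; at `κ = 1` the disks `d₁, d₋₁` become
tangent and at `κ = 4` the disks `d₂, d₋₂` become tangent. -/
theorem pyramidal_parameter_iff (κ : ℝ) (hκ : 0 < κ) :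
    ((lprod (v1 κ) vm1 < -1 ∧ lprod (v2 κ) (vm2 κ) < -1) ↔ (1 < κ ∧ κ < 4)) ∧
    lprod (v1 1) vm1 = -1 ∧
    lprod (v2 4) (vm2 4) = -1 := by
  refine ⟨and_congr (lprod_v1_vm1_lt_neg_one_iff κ) (lprod_v2_vm2_lt_neg_one_iff hκ), ?_, ?_⟩
  · rw [lprod_v1_vm1]
    norm_num
  · rw [lprod_v2_vm2 four_pos]
    norm_num
end
end

section
/- For every real κ with 1 < κ < 4, there is a unique vector v ∈ ℝ⁴ with ⟨v,v⟩ = 1, ⟨v, v_2⟩ = 0, ⟨v, v_{-2}⟩ = 0, ⟨v, v_x⟩ = 0 and ⟨v, v_1⟩ > 1, namely the mirror-disk vector v_1* = (0, −√κ/2, −1/√κ, (κ−2)/(2√κ)); moreover ⟨v_1*, v_1⟩ = √κ, which is strictly greater than 1. -/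
noncomputable section

/-- The mirror disk `d₁*`. -/
def v1star (κ : ℝ) : Fin 4 → ℝ :=
  ![0, -(Real.sqrt κ / 2), -(1 / Real.sqrt κ), (κ - 2) / (2 * Real.sqrt κ)]

/-! The three orthogonality conditions are linear and cut out the line through `v₁*`, a vector
of Lorentzian norm `1`; normalizing leaves `±v₁*`, and `⟨v₁*, v₁⟩ = √κ > 1` selects the sign. -/

theorem lprod_vecCons_right (u : Fin 4 → ℝ) (a b c d : ℝ) :
    lprod u ![a, b, c, d] = u 0 * a + u 1 * b + u 2 * c - u 3 * d :=
  rfl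

theorem lprod_vecCons (a b c d a' b' c' d' : ℝ) :
    lprod ![a, b, c, d] ![a', b', c', d'] = a * a' + b * b' + c * c' - d * d' :=
  rfl

theorem lprod_smul_left (t : ℝ) (u v : Fin 4 → ℝ) : lprod (t • u) v = t * lprod u v := by
  simp only [lprod, Pi.smul_apply, smul_eq_mul]; ring

theorem lprod_smul_right (t : ℝ) (u v : Fin 4 → ℝ) : lprod u (t • v) = t * lprod u v := by
  simp only [lprod, Pi.smul_apply, smul_eq_mul]; ring

theorem lprod_v1star_self {κ : ℝ} (hκ : 0 < κ) : lprod (v1star κ) (v1star κ) = 1 := by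
  have hs := Real.sq_sqrt hκ.le
  have := (Real.sqrt_pos.mpr hκ).ne'
  rw [v1star, lprod_vecCons]
  field_simp
  linear_combination (Real.sqrt κ ^ 2 + κ - 4) * hs

theorem lprod_v1star_v1 {κ : ℝ} (hκ : 0 < κ) : lprod (v1star κ) (v1 κ) = Real.sqrt κ := by
  have hs := Real.sq_sqrt hκ.le
  have := (Real.sqrt_pos.mpr hκ).ne'
  rw [v1star, v1, lprod_vecCons]
  field_simp
  linear_combination (κ - 3) * hs

theorem lprod_v1star_v2 {κ : ℝ} (hκ : 0 < κ) : lprod (v1star κ) (v2 κ) = 0 := by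
  have := (Real.sqrt_pos.mpr hκ).ne'
  rw [v1star, v2, lprod_vecCons]
  field_simp
  ring

theorem lprod_v1star_vm2 {κ : ℝ} (hκ : 0 < κ) : lprod (v1star κ) (vm2 κ) = 0 := by
  have := (Real.sqrt_pos.mpr hκ).ne'
  rw [v1star, vm2, lprod_vecCons]
  field_simp
  ring

theorem lprod_v1star_vx {κ : ℝ} (hκ : 0 < κ) : lprod (v1star κ) vx = 0 := by
  have hs := Real.sq_sqrt hκ.le
  have := (Real.sqrt_pos.mpr hκ).ne'
  rw [v1star, vx, lprod_vecCons]
  field_simp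
  linear_combination hs

theorem exists_eq_smul_v1star_of_lprod_eq_zero {κ : ℝ} (hκ : 0 < κ) {v : Fin 4 → ℝ}
    (h2 : lprod v (v2 κ) = 0) (hm2 : lprod v (vm2 κ) = 0) (hx : lprod v vx = 0) :
    ∃ t : ℝ, v = t • v1star κ := by
  have hs := Real.sq_sqrt hκ.le
  have hs0 := (Real.sqrt_pos.mpr hκ).ne'
  rw [v2, lprod_vecCons_right] at h2
  rw [vm2, lprod_vecCons_right] at hm2
  rw [vx, lprod_vecCons_right] at hx
  have h0 : v 0 = 0 := by
    have : v 0 * (4 / Real.sqrt κ) = 0 := by linear_combination h2 - hm2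
    simpa [hs0] using this
  have h3 : v 3 = v 2 * (2 - κ) / 2 := by
    have : v 2 * (2 / κ - 1) - v 3 * (2 / κ) = 0 := by linear_combination (h2 + hm2) / 2
    field_simp at this
    linear_combination -this / 2
  have h1 : v 1 = v 2 * κ / 2 := by linear_combination -hx - h3
  refine ⟨-(Real.sqrt κ * v 2), funext fun i => ?_⟩
  fin_cases i
  · show v 0 = -(Real.sqrt κ * v 2) * 0
    rw [h0, mul_zero]
  · show v 1 = -(Real.sqrt κ * v 2) * -(Real.sqrt κ / 2)
    rw [h1]
    linear_combination (-v 2 / 2) * hs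
  · show v 2 = -(Real.sqrt κ * v 2) * -(1 / Real.sqrt κ)
    field_simp
  · show v 3 = -(Real.sqrt κ * v 2) * ((κ - 2) / (2 * Real.sqrt κ))
    rw [h3]
    field_simp
    ring

theorem mirror_disk_one_unique_general (κ : ℝ) (hκ1 : 1 < κ) :
    (∀ v : Fin 4 → ℝ,
      (lprod v v = 1 ∧ lprod v (v2 κ) = 0 ∧ lprod v (vm2 κ) = 0 ∧ lprod v vx = 0 ∧
        1 < lprod v (v1 κ)) ↔ v = v1star κ) ∧
    lprod (v1star κ) (v1 κ) = Real.sqrt κ ∧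
    1 < Real.sqrt κ := by
  have hκ : 0 < κ := by linarith
  have hs1 : 1 < Real.sqrt κ := by simpa using Real.sqrt_lt_sqrt zero_le_one hκ1
  refine ⟨fun v => ⟨?_, ?_⟩, lprod_v1star_v1 hκ, hs1⟩
  · rintro ⟨hnorm, h2, hm2, hx, h1⟩
    obtain ⟨t, rfl⟩ := exists_eq_smul_v1star_of_lprod_eq_zero hκ h2 hm2 hx
    rw [lprod_smul_left, lprod_smul_right, lprod_v1star_self hκ] at hnorm
    rw [lprod_smul_left, lprod_v1star_v1 hκ] at h1
    have ht_pos : 0 < t := by nlinarith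
    have ht : t = 1 := by nlinarith
    rw [ht, one_smul]
  · rintro rfl
    exact ⟨lprod_v1star_self hκ, lprod_v1star_v2 hκ, lprod_v1star_vm2 hκ, lprod_v1star_vx hκ,
      (lprod_v1star_v1 hκ).symm ▸ hs1⟩

/-- For `1 < κ < 4`, the unique normalized vector orthogonal to `v₂`, `v₋₂`, `v_x`
and with product `> 1` with `v₁` is the mirror-disk vector
`v₁* = (0, −√κ/2, −1/√κ, (κ−2)/(2√κ))`; moreover `⟨v₁*, v₁⟩ = √κ > 1`. -/
theorem mirror_disk_one_unique (κ : ℝ) (hκ1 : 1 < κ) (hκ4 : κ < 4) :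
    (∀ v : Fin 4 → ℝ,
      (lprod v v = 1 ∧ lprod v (v2 κ) = 0 ∧ lprod v (vm2 κ) = 0 ∧ lprod v vx = 0 ∧
        1 < lprod v (v1 κ)) ↔ v = v1star κ) ∧
    lprod (v1star κ) (v1 κ) = Real.sqrt κ ∧
    1 < Real.sqrt κ :=
  mirror_disk_one_unique_general κ hκ1
end
end
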